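/- arXiv:2111.04553 — 2 statements merged into one kernel-verified Lean document; each statement's English description precedes it below -/
import Mathlib

section
/- Let b be a fixed integer and let {μ_k}_{k=−∞}^{b} be a bounded sequence of nonnegative real numbers for which there exist positive numbers D, α, δ such that for all k ≤ b: μ_k ≤ D e^{−α(b−k)} + δ · Σ_{m=−∞}^{k−1} e^{−α(k−m−1)} μ_m + δ · Σ_{m=k}^{b−1} e^{−α(m+1−k)} μ_m (sums over empty ranges are 0). If σ = δ(1+e^{−α})(1−e^{−α})^{−1} < 1, then for all k ≤ b, μ_k ≤ [D / (1 − δe^{−γ}/(1 − e^{−(α+γ)}))] · e^{−γ(b−k)}, where γ = β + log(1 + 2δ sinh α) and β = −log(cosh α − √(sinh² α − 2δ sinh α)). -/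
/-!
Put `a = e^{-α}` and `x = e^{-γ}`. The choice of `γ` makes `x` the smaller root of the
characteristic equation `δ (1 - a²) x² = (x - a) (1 - a x)`, and this root lies in `(a, 1)`.
For such `x` the sequence `ν_k = K x^{b-k}`, with `K` the constant of the statement, satisfies the
hypothesis on `μ` with equality. The kernel of the inequality has total mass `σ < 1`, so if
`M > 0` were the supremum of `μ - ν` over `k ≤ b`, the inequality would give `M ≤ σ M`.
-/

open Real Finset

/-- The two sums of the inequality in the coordinate `n = b - k`: the tail `m < k` becomes the
indices `n + 1 + j`, and the head `k ≤ m < b` becomes the indices `n - i` with `i < n`. -/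
noncomputable def kernelSum (p q u : ℕ → ℝ) (n : ℕ) : ℝ :=
  ∑' j, p j * u (n + 1 + j) + ∑ i ∈ range n, q i * u (n - i)

section Comparison

variable {p q u v : ℕ → ℝ}

lemma kernelSum_le_add {c : ℝ} {n : ℕ} (hp : ∀ j, 0 ≤ p j) (hq : ∀ i, 0 ≤ q i) (hps : Summable p)
    (hqs : Summable q) (hc : 0 ≤ c) (huv : ∀ m, u m ≤ v m + c)
    (hus : Summable fun j => p j * u (n + 1 + j)) (hvs : Summable fun j => p j * v (n + 1 + j)) :
    kernelSum p q u n ≤ kernelSum p q v n + c * (∑' j, p j + ∑' i, q i) := by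
  have hmul (r : ℝ) (hr : 0 ≤ r) (m : ℕ) : r * u m ≤ r * v m + c * r := by
    nlinarith [mul_le_mul_of_nonneg_left (huv m) hr]
  have htail : ∑' j, p j * u (n + 1 + j) ≤ ∑' j, p j * v (n + 1 + j) + c * ∑' j, p j := by
    rw [← tsum_mul_left, ← hvs.tsum_add (hps.mul_left c)]
    exact hus.tsum_le_tsum (fun j => hmul _ (hp j) _) (hvs.add (hps.mul_left c))
  have hhead : ∑ i ∈ range n, q i * u (n - i) ≤ ∑ i ∈ range n, q i * v (n - i) + c * ∑' i, q i :=
    calc ∑ i ∈ range n, q i * u (n - i)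
        ≤ ∑ i ∈ range n, (q i * v (n - i) + c * q i) :=
          sum_le_sum fun i _ => hmul _ (hq i) _
      _ ≤ ∑ i ∈ range n, q i * v (n - i) + c * ∑' i, q i := by
          rw [sum_add_distrib, ← mul_sum]
          gcongr
          exact hqs.sum_le_tsum _ fun i _ => hq i
  unfold kernelSum
  linarith

lemma nonpos_of_bound_imp_mul_bound {ι : Type*} [Nonempty ι] {w : ι → ℝ} {σ : ℝ}
    (hbdd : BddAbove (Set.range w)) (hσ : σ < 1)
    (h : ∀ c, 0 ≤ c → (∀ i, w i ≤ c) → ∀ i, w i ≤ σ * c) (i : ι) : w i ≤ 0 := by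
  set M := ⨆ i, w i
  have hM : M ≤ σ * max M 0 :=
    ciSup_le <| h _ (le_max_right _ _) fun i => (le_ciSup hbdd i).trans (le_max_left _ _)
  have hM0 : M ≤ 0 := by
    by_contra! hpos
    rw [max_eq_left hpos.le] at hM
    nlinarith
  exact (le_ciSup hbdd i).trans hM0

theorem le_of_le_kernelSum {F : ℕ → ℝ} (hp : ∀ j, 0 ≤ p j) (hq : ∀ i, 0 ≤ q i) (hps : Summable p)
    (hqs : Summable q) (hpq : ∑' j, p j + ∑' i, q i < 1) (hbdd : BddAbove (Set.range (u - v)))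
    (hus : ∀ n, Summable fun j => p j * u (n + 1 + j))
    (hvs : ∀ n, Summable fun j => p j * v (n + 1 + j))
    (hu : ∀ n, u n ≤ F n + kernelSum p q u n) (hv : ∀ n, F n + kernelSum p q v n ≤ v n)
    (n : ℕ) : u n ≤ v n := by
  refine sub_nonpos.mp <| nonpos_of_bound_imp_mul_bound hbdd hpq (fun c hc huv m => ?_) n
  have huv' (m : ℕ) : u m ≤ v m + c := by linarith [huv m, Pi.sub_apply u v m]
  simp only [Pi.sub_apply]
  linarith [hu m, hv m, kernelSum_le_add hp hq hps hqs hc huv' (hus m) (hvs m)]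

end Comparison

section Geometric

variable {a x δ : ℝ}

lemma hasSum_geometric_tail (ha : 0 ≤ a) (hax : a < x) (hx : x < 1) (K : ℝ) (n : ℕ) :
    HasSum (fun j => δ * a ^ j * (K * x ^ (n + 1 + j))) (δ * K * x ^ (n + 1) / (1 - a * x)) := by
  have := (hasSum_geometric_of_lt_one (by nlinarith) (by nlinarith : a * x < 1)).mul_left
    (δ * K * x ^ (n + 1))
  rw [div_eq_mul_inv]
  refine this.congr_fun fun j => ?_
  rw [pow_add, mul_pow]
  ring

lemma sum_range_geometric_head (hax : a < x) (K : ℝ) (n : ℕ) :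
    ∑ i ∈ range n, δ * a ^ (i + 1) * (K * x ^ (n - i))
      = δ * K * a * x * (x ^ n - a ^ n) / (x - a) := by
  have hsum : ∑ i ∈ range n, δ * a ^ (i + 1) * (K * x ^ (n - i))
      = δ * K * a * x * ∑ i ∈ range n, a ^ i * x ^ (n - 1 - i) := by
    rw [mul_sum]
    refine sum_congr rfl fun i hi => ?_
    rw [show n - i = n - 1 - i + 1 by have := mem_range.mp hi; omega]
    ring
  rw [eq_div_iff (sub_ne_zero.mpr hax.ne'), hsum]
  linear_combination (-(δ * K * a * x)) * geom_sum₂_mul a x n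

theorem geometric_eq_add_kernelSum (ha : 0 < a) (hax : a < x) (hx : x < 1) (hδ : 0 < δ)
    (hchar : δ * (1 - a ^ 2) * x ^ 2 = (x - a) * (1 - a * x)) (D : ℝ) (n : ℕ) :
    D * a ^ n + kernelSum (fun j => δ * a ^ j) (fun i => δ * a ^ (i + 1))
        (fun n => D / (1 - δ * x / (1 - a * x)) * x ^ n) n
      = D / (1 - δ * x / (1 - a * x)) * x ^ n := by
  set ρ := δ * x / (1 - a * x) with hρ_def
  set K := D / (1 - ρ)
  have hxa : x - a ≠ 0 := (sub_pos.mpr hax).ne'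
  have h1ax : 1 - a * x ≠ 0 := by nlinarith
  have hx0 : 0 < x := ha.trans hax
  have hρ : 1 - ρ = δ * a * x / (x - a) := by
    rw [one_sub_div h1ax, div_eq_div_iff h1ax hxa]
    linear_combination -hchar
  have hK : (1 - ρ) * K = D :=
    mul_div_cancel₀ D (by rw [hρ]; exact div_ne_zero (by positivity) hxa)
  have htail : δ * K * x ^ (n + 1) / (1 - a * x) = ρ * (K * x ^ n) := by
    rw [hρ_def, pow_succ]; ring
  have hhead : δ * K * a * x * (x ^ n - a ^ n) / (x - a) = (1 - ρ) * K * (x ^ n - a ^ n) := by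
    rw [hρ]; ring
  unfold kernelSum
  rw [(hasSum_geometric_tail ha.le hax hx K n).tsum_eq, sum_range_geometric_head hax, htail, hhead]
  linear_combination (-a ^ n) * hK

theorem le_geometric_of_le_kernelSum {D : ℝ} {u : ℕ → ℝ} (ha : 0 < a) (hax : a < x) (hx : x < 1)
    (hδ : 0 < δ) (hσ : δ * (1 + a) * (1 - a)⁻¹ < 1)
    (hchar : δ * (1 - a ^ 2) * x ^ 2 = (x - a) * (1 - a * x)) (hbdd : BddAbove (Set.range u))
    (hus : ∀ n, Summable fun j => δ * a ^ j * u (n + 1 + j))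
    (hu : ∀ n, u n ≤ D * a ^ n + kernelSum (fun j => δ * a ^ j) (fun i => δ * a ^ (i + 1)) u n)
    (n : ℕ) : u n ≤ D / (1 - δ * x / (1 - a * x)) * x ^ n := by
  set K := D / (1 - δ * x / (1 - a * x))
  have hx0 : 0 < x := ha.trans hax
  have hgeom := hasSum_geometric_of_lt_one ha.le (hax.trans hx)
  have hp : HasSum (fun j => δ * a ^ j) (δ * (1 - a)⁻¹) := hgeom.mul_left δ
  have hq : HasSum (fun i => δ * a ^ (i + 1)) (δ * a * (1 - a)⁻¹) :=
    (hgeom.mul_left (δ * a)).congr_fun fun i => by ring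
  have hpq : ∑' j, δ * a ^ j + ∑' i, δ * a ^ (i + 1) < 1 := by
    rw [hp.tsum_eq, hq.tsum_eq]
    linarith
  have hbdd' : BddAbove (Set.range (u - fun m => K * x ^ m)) := by
    obtain ⟨C, hC⟩ := hbdd
    refine ⟨C + |K|, ?_⟩
    rintro _ ⟨m, rfl⟩
    have hKx : -(K * x ^ m) ≤ |K| := (neg_le_abs _).trans <| by
      rw [abs_mul, abs_pow, abs_of_pos hx0]
      exact mul_le_of_le_one_right (abs_nonneg K) (pow_le_one₀ hx0.le hx.le)
    simp only [Pi.sub_apply]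
    linarith [hC ⟨m, rfl⟩]
  exact le_of_le_kernelSum (fun j => by positivity) (fun i => by positivity) hp.summable
    hq.summable hpq hbdd' hus (fun m => (hasSum_geometric_tail ha.le hax hx K m).summable) hu
    (fun m => (geometric_eq_add_kernelSum ha hax hx hδ hchar D m).le) n

end Geometric

lemma smaller_root_mem_Ioo {A B C u w : ℝ} (hA : 0 < A) (hu : 0 < A * u ^ 2 - 2 * B * u + C)
    (hw : A * w ^ 2 - 2 * B * w + C < 0) (huw : u < w) :
    u < (B - √(B ^ 2 - A * C)) / A ∧ (B - √(B ^ 2 - A * C)) / A < w ∧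
      A * ((B - √(B ^ 2 - A * C)) / A) ^ 2 - 2 * B * ((B - √(B ^ 2 - A * C)) / A) + C = 0 := by
  have hdisc : 0 ≤ B ^ 2 - A * C := by nlinarith [sq_nonneg (A * w - B)]
  set s := √(B ^ 2 - A * C)
  have hs : s ^ 2 = B ^ 2 - A * C := sq_sqrt hdisc
  have hs0 : 0 ≤ s := sqrt_nonneg _
  have hfactor (t : ℝ) :
      A * t ^ 2 - 2 * B * t + C = A * (t - (B - s) / A) * (t - (B + s) / A) := by
    field_simp
    linear_combination hs
  rw [hfactor] at hu hw
  have hr : (B - s) / A ≤ (B + s) / A := by gcongr; linarith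
  have hw' : (w - (B - s) / A) * (w - (B + s) / A) < 0 := by nlinarith
  have hw_lt : w < (B + s) / A := by nlinarith
  have hu' : 0 < (u - (B - s) / A) * (u - (B + s) / A) := by nlinarith
  refine ⟨by nlinarith, by nlinarith, ?_⟩
  rw [hfactor]
  ring

theorem exp_neg_gamma_charRoot {α δ β γ : ℝ} (hα : 0 < α) (hδ : 0 < δ)
    (hσ : δ * (1 + exp (-α)) * (1 - exp (-α))⁻¹ < 1)
    (hβ : β = -log (cosh α - √(sinh α ^ 2 - 2 * δ * sinh α)))
    (hγ : γ = β + log (1 + 2 * δ * sinh α)) :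
    exp (-α) < exp (-γ) ∧ exp (-γ) < 1 ∧
      δ * (1 - exp (-α) ^ 2) * exp (-γ) ^ 2
        = (exp (-γ) - exp (-α)) * (1 - exp (-α) * exp (-γ)) := by
  have hcs := cosh_sq_sub_sinh_sq α
  have hS : 2 * exp (-α) * sinh α = 1 - exp (-α) ^ 2 := by
    rw [← cosh_sub_sinh]; linear_combination hcs
  have hC : 2 * exp (-α) * cosh α = 1 + exp (-α) ^ 2 := by
    rw [← cosh_sub_sinh]; linear_combination hcs
  set a := exp (-α)
  set L := 1 + 2 * δ * sinh α
  have ha0 : 0 < a := exp_pos _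
  have ha1 : a < 1 := exp_lt_one_iff.mpr (neg_neg_of_pos hα)
  have hL : 0 < L := by have := sinh_pos_iff.mpr hα; positivity
  rw [← div_eq_mul_inv, div_lt_one (by linarith)] at hσ
  -- `exp (-γ)` is the smaller root of `L t² - 2 cosh α t + 1`, positive at `a` and negative at `1`.
  have hPa : 0 < L * a ^ 2 - 2 * cosh α * a + 1 := by
    have : L * a ^ 2 - 2 * cosh α * a + 1 = δ * a * (1 - a ^ 2) := by
      linear_combination δ * a * hS - hC
    rw [this]
    have : 0 < 1 - a ^ 2 := by nlinarith
    positivity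
  have hP1 : L * 1 ^ 2 - 2 * cosh α * 1 + 1 < 0 := by
    have : a * (L * 1 ^ 2 - 2 * cosh α * 1 + 1) = (1 - a) * (δ * (1 + a) - (1 - a)) := by
      linear_combination δ * hS - hC
    nlinarith
  have hdisc : cosh α ^ 2 - L * 1 = sinh α ^ 2 - 2 * δ * sinh α := by linear_combination hcs
  obtain ⟨har, hr1, hroot⟩ := smaller_root_mem_Ioo hL hPa hP1 ha1
  rw [hdisc] at har hr1 hroot
  set r := (cosh α - √(sinh α ^ 2 - 2 * δ * sinh α)) / L
  have hr : exp (-γ) = r := by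
    have hnum : 0 < cosh α - √(sinh α ^ 2 - 2 * δ * sinh α) :=
      (div_pos_iff_of_pos_right hL).mp (ha0.trans har)
    rw [hγ, hβ, neg_add, neg_neg, exp_add, exp_log hnum, exp_neg, exp_log hL, ← div_eq_mul_inv]
  rw [hr]
  exact ⟨har, hr1, by linear_combination a * hroot - δ * r ^ 2 * hS + r * hC⟩

section Reindex

variable {μ : ℤ → ℝ} {α : ℝ}

lemma sum_Icc_sub_natCast (f : ℤ → ℝ) (b : ℤ) (n : ℕ) :
    ∑ m ∈ Icc (b - n) (b - 1), f m = ∑ i ∈ range n, f (b - n + i) := by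
  rw [Int.Icc_eq_finset_map, sum_map, show (b - 1 + 1 - (b - n)).toNat = n by omega]
  rfl

lemma exp_neg_mul_natCast (α : ℝ) (n : ℕ) : exp (-α * n) = exp (-α) ^ n := by
  rw [mul_comm, exp_nat_mul]

lemma exp_neg_mul_natCast_mul_sub_sub (b : ℤ) (n j : ℕ) :
    exp (-α * j) * μ (b - n - 1 - j) = exp (-α) ^ j * μ (b - (n + 1 + j : ℕ)) := by
  rw [exp_neg_mul_natCast]
  push_cast
  ring_nf

lemma le_kernelSum_of_le_tsum_add_sum {b : ℤ} {D δ : ℝ}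
    (hineq : ∀ k : ℤ, k ≤ b →
      μ k ≤ D * exp (-α * ((b : ℝ) - (k : ℝ)))
        + δ * ∑' j : ℕ, exp (-α * (j : ℝ)) * μ (k - 1 - j)
        + δ * ∑ m ∈ Icc k (b - 1), exp (-α * ((m : ℝ) + 1 - (k : ℝ))) * μ m)
    (n : ℕ) :
    μ (b - n) ≤ D * exp (-α) ^ n + kernelSum (fun j => δ * exp (-α) ^ j)
      (fun i => δ * exp (-α) ^ (i + 1)) (fun n => μ (b - n)) n := by
  have hk := hineq (b - n) (by omega)
  have hdist : (b : ℝ) - ((b - n : ℤ) : ℝ) = n := by push_cast; ring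
  have htail : δ * ∑' j : ℕ, exp (-α * (j : ℝ)) * μ (b - n - 1 - j)
      = ∑' j : ℕ, δ * exp (-α) ^ j * μ (b - (n + 1 + j : ℕ)) := by
    rw [← tsum_mul_left]
    exact tsum_congr fun j => by rw [exp_neg_mul_natCast_mul_sub_sub, mul_assoc]
  have hhead : δ * ∑ m ∈ Icc (b - n) (b - 1), exp (-α * ((m : ℝ) + 1 - ((b - n : ℤ) : ℝ))) * μ m
      = ∑ i ∈ range n, δ * exp (-α) ^ (i + 1) * μ (b - (n - i : ℕ)) := by
    rw [sum_Icc_sub_natCast, mul_sum]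
    refine sum_congr rfl fun i hi => ?_
    rw [Nat.cast_sub (mem_range.mp hi).le, ← exp_neg_mul_natCast, mul_assoc]
    push_cast
    ring_nf
  rw [hdist, exp_neg_mul_natCast, htail, hhead] at hk
  unfold kernelSum
  linarith

end Reindex

theorem statement16_general (b : ℤ) (μ : ℤ → ℝ) (D α δ : ℝ)
    (hα : 0 < α) (hδ : 0 < δ)
    (hbdd : ∃ C : ℝ, ∀ k : ℤ, k ≤ b → μ k ≤ C)
    (hsum : ∀ k : ℤ, k ≤ b →
      Summable fun j : ℕ => Real.exp (-α * (j : ℝ)) * μ (k - 1 - j))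
    (hineq : ∀ k : ℤ, k ≤ b →
      μ k ≤ D * Real.exp (-α * ((b : ℝ) - (k : ℝ)))
        + δ * ∑' j : ℕ, Real.exp (-α * (j : ℝ)) * μ (k - 1 - j)
        + δ * ∑ m ∈ Finset.Icc k (b - 1), Real.exp (-α * ((m : ℝ) + 1 - (k : ℝ))) * μ m)
    (hσ : δ * (1 + Real.exp (-α)) * (1 - Real.exp (-α))⁻¹ < 1)
    (β γ : ℝ)
    (hβ : β = -Real.log (Real.cosh α - Real.sqrt (Real.sinh α ^ 2 - 2 * δ * Real.sinh α)))
    (hγ : γ = β + Real.log (1 + 2 * δ * Real.sinh α)) :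
    ∀ k : ℤ, k ≤ b →
      μ k ≤ D / (1 - δ * Real.exp (-γ) / (1 - Real.exp (-(α + γ))))
        * Real.exp (-γ * ((b : ℝ) - (k : ℝ))) := by
  obtain ⟨hαγ, hγ1, hchar⟩ := exp_neg_gamma_charRoot hα hδ hσ hβ hγ
  have hbdd' : BddAbove (Set.range fun n : ℕ => μ (b - n)) := by
    obtain ⟨C, hC⟩ := hbdd
    exact ⟨C, by rintro _ ⟨n, rfl⟩; exact hC _ (by omega)⟩
  have hsum' (n : ℕ) : Summable fun j => δ * exp (-α) ^ j * μ (b - (n + 1 + j : ℕ)) := by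
    simp only [mul_assoc, ← exp_neg_mul_natCast_mul_sub_sub]
    exact (hsum (b - n) (by omega)).mul_left δ
  intro k hk
  obtain ⟨n, rfl⟩ : ∃ n : ℕ, k = b - n := ⟨(b - k).toNat, by omega⟩
  convert le_geometric_of_le_kernelSum (exp_pos _) hαγ hγ1 hδ hσ hchar hbdd' hsum'
    (le_kernelSum_of_le_tsum_add_sum hineq) n using 2
  · rw [neg_add, exp_add]
  · push_cast
    rw [sub_sub_cancel, exp_neg_mul_natCast]

/-- discrete Gronwall-type lemma on `(-∞, b]` (Lemma 3 (ii) of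
Zhou–Lu–Zhang). The infinite tail `Σ_{m=-∞}^{k-1} e^{-α(k-m-1)} μ_m` is written as
`Σ'_{j : ℕ} e^{-α j} μ_{k-1-j}` via the substitution `m = k - 1 - j`. -/
theorem statement16 (b : ℤ) (μ : ℤ → ℝ) (D α δ : ℝ)
    (hD : 0 < D) (hα : 0 < α) (hδ : 0 < δ)
    (hnonneg : ∀ k : ℤ, k ≤ b → 0 ≤ μ k)
    (hbdd : ∃ C : ℝ, ∀ k : ℤ, k ≤ b → μ k ≤ C)
    (hsum : ∀ k : ℤ, k ≤ b →
      Summable fun j : ℕ => Real.exp (-α * (j : ℝ)) * μ (k - 1 - j))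
    (hineq : ∀ k : ℤ, k ≤ b →
      μ k ≤ D * Real.exp (-α * ((b : ℝ) - (k : ℝ)))
        + δ * ∑' j : ℕ, Real.exp (-α * (j : ℝ)) * μ (k - 1 - j)
        + δ * ∑ m ∈ Finset.Icc k (b - 1), Real.exp (-α * ((m : ℝ) + 1 - (k : ℝ))) * μ m)
    (hσ : δ * (1 + Real.exp (-α)) * (1 - Real.exp (-α))⁻¹ < 1)
    (β γ : ℝ)
    (hβ : β = -Real.log (Real.cosh α - Real.sqrt (Real.sinh α ^ 2 - 2 * δ * Real.sinh α)))
    (hγ : γ = β + Real.log (1 + 2 * δ * Real.sinh α)) :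
    ∀ k : ℤ, k ≤ b →
      μ k ≤ D / (1 - δ * Real.exp (-γ) / (1 - Real.exp (-(α + γ))))
        * Real.exp (-γ * ((b : ℝ) - (k : ℝ))) :=
  statement16_general b μ D α δ hα hδ hbdd hsum hineq hσ β γ hβ hγ
end

section
/- Let J ⊆ ℤ be an interval of integers (finite or infinite) and assume the equation x(k+1) = A(k)x(k) has an exponential dichotomy on J with constants K, α and projection P(k). Then there exist real n×n matrices Ã(k) defined for all k ∈ ℤ, with Ã(k) = A(k) whenever k and k+1 both lie in J, such that the equation x(k+1) = Ã(k)x(k) has an exponential dichotomy on all of ℤ with the same constant K and exponent α, and with a projection family P̃(k) satisfying P̃(k) = P(k) for k ∈ J. -/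
/-!
Outside `J` the coefficients are frozen at the nearest endpoint `j` of `J`:
`Ã = e^{-α} P(j) + e^{α} (I - P(j))` contracts `R(P(j))` and expands `N(P(j))` at exactly the
rate `α`. Writing `c(k)` for the point of `J` nearest to `k` and
`T(k) = e^{-α(k - c k)} P(c k) + e^{α(k - c k)} (I - P(c k))`, one has
`Φ̃(k,m) T(m) = T(k) Φ(c k, c m)`. Hence on the stable (unstable) spaces `Φ̃(k,m)` is
`Φ(c k, c m)` multiplied by `e^{∓α((k - m) - (c k - c m))}`, and the estimates on `J` carry over
with the same `K` and `α`. An empty `J` is first replaced by a point, with `P = I`.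
-/

noncomputable section

open scoped BigOperators

/-- ℝⁿ as a Euclidean space. -/
abbrev Euc (n : ℕ) := EuclideanSpace ℝ (Fin n)

/-- The transition matrix `Φ(k,m) = A(k-1) ⋯ A(m)`, with `Φ(m,m) = 1`
(and `Φ(k,m) = 1` when `k ≤ m`). -/
def Phi {n : ℕ} (A : ℤ → (Euc n →L[ℝ] Euc n)) (k m : ℤ) : Euc n →L[ℝ] Euc n :=
  (((List.range (k - m).toNat).map fun i => A (m + i)).reverse).prod

/-- `J` is an interval of integers. -/
def IsIntInterval (J : Set ℤ) : Prop :=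
  ∀ ⦃a b c : ℤ⦄, a ∈ J → b ∈ J → a ≤ c → c ≤ b → c ∈ J

/-- The equation `x(k+1) = A(k) x(k)` has an exponential dichotomy on `J` with
projection family `P`, constant `K` and exponent `α`. -/
structure ExpDichotomyOn {n : ℕ} (A : ℤ → (Euc n →L[ℝ] Euc n)) (J : Set ℤ)
    (P : ℤ → (Euc n →L[ℝ] Euc n)) (K α : ℝ) : Prop where
  one_le_K : 1 ≤ K
  alpha_pos : 0 < α
  proj : ∀ k ∈ J, P k ∘L P k = P k
  rank_const : ∀ k ∈ J, ∀ m ∈ J,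
    Module.finrank ℝ (LinearMap.range (P k : Euc n →ₗ[ℝ] Euc n)) = Module.finrank ℝ (LinearMap.range (P m : Euc n →ₗ[ℝ] Euc n))
  invariance : ∀ m ∈ J, ∀ k ∈ J, m ≤ k → Phi A k m ∘L P m = P k ∘L Phi A k m
  forward : ∀ m ∈ J, ∀ k ∈ J, m ≤ k →
    ‖Phi A k m ∘L P m‖ ≤ K * Real.exp (-α * ((k : ℝ) - (m : ℝ)))
  bijOn : ∀ k : ℤ, k ∈ J → k + 1 ∈ J →
    Set.BijOn (A k) (LinearMap.ker (P k : Euc n →ₗ[ℝ] Euc n) : Set (Euc n)) (LinearMap.ker (P (k + 1) : Euc n →ₗ[ℝ] Euc n) : Set (Euc n))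
  backward : ∃ Ψ : ℤ → ℤ → (Euc n →L[ℝ] Euc n), ∀ m ∈ J, ∀ k ∈ J, m ≤ k →
    (∀ x ∈ LinearMap.ker (P m : Euc n →ₗ[ℝ] Euc n), Ψ m k (Phi A k m x) = x) ∧
    (∀ x ∈ LinearMap.ker (P k : Euc n →ₗ[ℝ] Euc n), Ψ m k x ∈ LinearMap.ker (P m : Euc n →ₗ[ℝ] Euc n) ∧ Phi A k m (Ψ m k x) = x) ∧
    ‖Ψ m k ∘L (1 - P k)‖ ≤ K * Real.exp (-α * ((k : ℝ) - (m : ℝ)))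

open ContinuousLinearMap Set

section Transition

variable {n : ℕ} (A : ℤ → (Euc n →L[ℝ] Euc n))

lemma Phi_self (m : ℤ) : Phi A m m = 1 := by
  simp [Phi]

lemma Phi_succ {k m : ℤ} (h : m ≤ k) : Phi A (k + 1) m = A k ∘L Phi A k m := by
  have hlen : (k + 1 - m).toNat = (k - m).toNat + 1 := by omega
  simp [Phi, hlen, List.range_succ, max_eq_left (sub_nonneg.2 h), mul_def]

lemma Phi_succ_self (k : ℤ) : Phi A (k + 1) k = A k := by
  rw [Phi_succ A le_rfl, Phi_self, ← mul_def, mul_one]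

lemma Phi_comp_Phi {k p m : ℤ} (hmp : m ≤ p) (hpk : p ≤ k) :
    Phi A k p ∘L Phi A p m = Phi A k m := by
  induction k, hpk using Int.leInduction with
  | base => rw [Phi_self, ← mul_def, one_mul]
  | succ k hpk ih => rw [Phi_succ A hpk, Phi_succ A (hmp.trans hpk), comp_assoc, ih]

lemma Phi_comp_eq_comp_Phi {B T : ℤ → (Euc n →L[ℝ] Euc n)}
    (hstep : ∀ k, B k ∘L T k = T (k + 1) ∘L A k) {k m : ℤ} (hmk : m ≤ k) :
    Phi B k m ∘L T m = T k ∘L Phi A k m := by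
  induction k, hmk using Int.leInduction with
  | base => rw [Phi_self, Phi_self, ← mul_def, ← mul_def, one_mul, mul_one]
  | succ k hmk ih =>
    rw [Phi_succ B hmk, Phi_succ A hmk, comp_assoc, ih, ← comp_assoc, hstep, comp_assoc]

lemma Phi_telescope {c : ℤ → ℤ} (hc : Monotone c) {k m : ℤ} (hmk : m ≤ k) :
    Phi (fun i => Phi A (c (i + 1)) (c i)) k m = Phi A (c k) (c m) := by
  induction k, hmk using Int.leInduction with
  | base => rw [Phi_self, Phi_self]
  | succ k hmk ih =>
    rw [Phi_succ _ hmk, ih, Phi_comp_Phi A (hc hmk) (hc (Int.le_add_one le_rfl))]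

end Transition

section ExpScale

variable {E : Type*} [NormedAddCommGroup E] [NormedSpace ℝ E] (α : ℝ) {p q : E →L[ℝ] E}

def expScale (p : E →L[ℝ] E) (t : ℝ) : E →L[ℝ] E :=
  Real.exp (-α * t) • p + Real.exp (α * t) • (1 - p)

lemma expScale_apply (t : ℝ) (x : E) :
    expScale α p t x = Real.exp (-α * t) • p x + Real.exp (α * t) • (x - p x) := by
  simp [expScale]

lemma expScale_zero : expScale α p 0 = 1 := by
  ext x; simp [expScale]

lemma expScale_apply_of_ker {x : E} (hx : p x = 0) (t : ℝ) :
    expScale α p t x = Real.exp (α * t) • x := by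
  simp [expScale, hx]

lemma expScale_apply_of_fixed {x : E} (hx : p x = x) (t : ℝ) :
    expScale α p t x = Real.exp (-α * t) • x := by
  simp [expScale, hx]

lemma apply_apply_of_comp_self (hp : p ∘L p = p) (x : E) : p (p x) = p x :=
  congr($hp x)

lemma expScale_comp_self (hp : p ∘L p = p) (t : ℝ) :
    expScale α p t ∘L p = Real.exp (-α * t) • p := by
  ext x
  simp [expScale_apply_of_fixed α (apply_apply_of_comp_self hp x)]

lemma comp_expScale_self (hp : p ∘L p = p) (t : ℝ) :
    p ∘L expScale α p t = Real.exp (-α * t) • p := by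
  ext x
  simp [expScale, apply_apply_of_comp_self hp]

lemma expScale_comp_expScale (hp : p ∘L p = p) (s t : ℝ) :
    expScale α p s ∘L expScale α p t = expScale α p (s + t) := by
  ext x
  simp only [comp_apply, expScale_apply, map_add, map_sub, map_smul, apply_apply_of_comp_self hp,
    mul_add, neg_mul, Real.exp_add]
  module

lemma expScale_bijOn_ker (t : ℝ) :
    BijOn (expScale α p t) (LinearMap.ker (p : E →ₗ[ℝ] E) : Set E)
      (LinearMap.ker (p : E →ₗ[ℝ] E) : Set E) := by
  refine InvOn.bijOn (f' := expScale α p (-t)) ⟨fun x hx => ?_, fun x hx => ?_⟩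
    (fun x hx => ?_) (fun x hx => ?_)
  all_goals
    simp only [SetLike.mem_coe, LinearMap.mem_ker, coe_coe] at hx ⊢
    simp [expScale_apply_of_ker α hx, hx, smul_smul, ← Real.exp_add]

lemma eq_exp_smul_of_exp_smul_eq {u v : E} {a b c : ℝ} (h : Real.exp a • u = Real.exp b • v)
    (hc : b - a = c) : u = Real.exp c • v := by
  calc u = Real.exp (-a) • Real.exp a • u := by
        rw [smul_smul, ← Real.exp_add, neg_add_cancel, Real.exp_zero, one_smul]
    _ = Real.exp c • v := by rw [h, smul_smul, ← Real.exp_add, ← hc]; ring_nf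

variable {α} {F G : E →L[ℝ] E} {s t : ℝ}

lemma comp_eq_smul_of_comp_expScale (hp : p ∘L p = p) (hG : G ∘L p = q ∘L G)
    (h : F ∘L expScale α p s = expScale α q t ∘L G) :
    F ∘L p = Real.exp (α * (s - t)) • (G ∘L p) := by
  ext x
  have hpx := apply_apply_of_comp_self hp x
  have hqGx : q (G (p x)) = G (p x) := by rw [← comp_apply q G, ← hG, comp_apply, hpx]
  have := congr($h (p x))
  simp only [comp_apply, expScale_apply_of_fixed α hpx, expScale_apply_of_fixed α hqGx,
    map_smul] at this
  exact eq_exp_smul_of_exp_smul_eq this (by ring)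

lemma apply_eq_smul_of_comp_expScale (hG : G ∘L p = q ∘L G)
    (h : F ∘L expScale α p s = expScale α q t ∘L G) {x : E} (hx : p x = 0) :
    F x = Real.exp (α * (t - s)) • G x := by
  have hqGx : q (G x) = 0 := by rw [← comp_apply q G, ← hG, comp_apply, hx, map_zero]
  have := congr($h x)
  simp only [comp_apply, expScale_apply_of_ker α hx, expScale_apply_of_ker α hqGx,
    map_smul] at this
  exact eq_exp_smul_of_exp_smul_eq this (by ring)

end ExpScale

lemma norm_exp_smul_le_of_le {E : Type*} [NormedAddCommGroup E] [NormedSpace ℝ E] {X : E}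
    {K a b c : ℝ} (hX : ‖X‖ ≤ K * Real.exp b) (habc : a + b = c) :
    ‖Real.exp a • X‖ ≤ K * Real.exp c := by
  calc ‖Real.exp a • X‖ = Real.exp a * ‖X‖ := by
        rw [norm_smul, Real.norm_of_nonneg (Real.exp_nonneg a)]
    _ ≤ Real.exp a * (K * Real.exp b) := by gcongr
    _ = K * Real.exp c := by rw [← habc, Real.exp_add]; ring

lemma exp_smul_exp_smul_of_add_eq_zero {E : Type*} [AddCommGroup E] [Module ℝ E] {a b : ℝ}
    (h : a + b = 0) (x : E) : Real.exp a • Real.exp b • x = x := by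
  rw [smul_smul, ← Real.exp_add, h, Real.exp_zero, one_smul]

section Nearest

variable {J : Set ℤ} (hne : J.Nonempty)

def nearestIn (k : ℤ) : ℤ :=
  Function.argminOn (fun j => (k - j).natAbs) J hne

lemma nearestIn_mem (k : ℤ) : nearestIn hne k ∈ J :=
  Function.argminOn_mem _ J hne

lemma natAbs_sub_nearestIn_le (k : ℤ) {j : ℤ} (hj : j ∈ J) :
    (k - nearestIn hne k).natAbs ≤ (k - j).natAbs :=
  Function.argminOn_le (fun j => (k - j).natAbs) J hj

lemma nearestIn_of_mem {k : ℤ} (hk : k ∈ J) : nearestIn hne k = k := by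
  have := natAbs_sub_nearestIn_le hne k hk
  omega

lemma IsIntInterval.monotone_nearestIn (hJ : IsIntInterval J) : Monotone (nearestIn hne) := by
  intro k l hkl
  by_contra! hlt
  have hk := natAbs_sub_nearestIn_le hne k (nearestIn_mem hne l)
  have hl := natAbs_sub_nearestIn_le hne l (nearestIn_mem hne k)
  have hkJ : k ∈ J := hJ (nearestIn_mem hne l) (nearestIn_mem hne k) (by omega) (by omega)
  rw [nearestIn_of_mem hne hkJ] at hlt hl
  omega

lemma IsIntInterval.nearestIn_succ (hJ : IsIntInterval J) {k : ℤ}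
    (hk : ¬(k ∈ J ∧ k + 1 ∈ J)) :
    nearestIn hne (k + 1) = nearestIn hne k := by
  have hle := hJ.monotone_nearestIn hne (Int.le_add_one (le_refl k))
  by_contra hdiff
  have h1 := natAbs_sub_nearestIn_le hne k (nearestIn_mem hne (k + 1))
  have h2 := natAbs_sub_nearestIn_le hne (k + 1) (nearestIn_mem hne k)
  exact hk ⟨hJ (nearestIn_mem hne k) (nearestIn_mem hne (k + 1)) (by omega) (by omega),
    hJ (nearestIn_mem hne k) (nearestIn_mem hne (k + 1)) (by omega) (by omega)⟩

end Nearest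

section Extension

variable {n : ℕ} (A P : ℤ → (Euc n →L[ℝ] Euc n)) {J : Set ℤ} (hne : J.Nonempty)
  (α : ℝ)

open Classical in
def extendCoeff (k : ℤ) : Euc n →L[ℝ] Euc n :=
  if k ∈ J ∧ k + 1 ∈ J then A k else expScale α (P (nearestIn hne k)) 1

def extendProj (k : ℤ) : Euc n →L[ℝ] Euc n :=
  P (nearestIn hne k)

lemma extendCoeff_of_mem {k : ℤ} (hk : k ∈ J) (hk1 : k + 1 ∈ J) :
    extendCoeff A P hne α k = A k :=
  if_pos ⟨hk, hk1⟩

lemma extendProj_of_mem {k : ℤ} (hk : k ∈ J) : extendProj P hne k = P k := by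
  rw [extendProj, nearestIn_of_mem hne hk]

variable {A P α} (hJ : IsIntInterval J) (hP : ∀ k ∈ J, P k ∘L P k = P k)
include hJ hP

lemma extendCoeff_comp_extendProj
    (hinv : ∀ m ∈ J, ∀ k ∈ J, m ≤ k → Phi A k m ∘L P m = P k ∘L Phi A k m)
    (k : ℤ) :
    extendCoeff A P hne α k ∘L extendProj P hne k
      = extendProj P hne (k + 1) ∘L extendCoeff A P hne α k := by
  by_cases hk : k ∈ J ∧ k + 1 ∈ J
  · rw [extendCoeff_of_mem A P hne α hk.1 hk.2, extendProj_of_mem P hne hk.1,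
      extendProj_of_mem P hne hk.2, ← Phi_succ_self A]
    exact hinv k hk.1 (k + 1) hk.2 (Int.le_add_one le_rfl)
  · have hp := hP _ (nearestIn_mem hne k)
    rw [extendCoeff, if_neg hk, extendProj, extendProj, hJ.nearestIn_succ hne hk,
      expScale_comp_self α hp, comp_expScale_self α hp]

lemma Phi_extendCoeff_comp_expScale {k m : ℤ} (hmk : m ≤ k) :
    Phi (extendCoeff A P hne α) k m ∘L
        expScale α (P (nearestIn hne m)) (m - nearestIn hne m : ℤ)
      = expScale α (P (nearestIn hne k)) (k - nearestIn hne k : ℤ) ∘L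
          Phi A (nearestIn hne k) (nearestIn hne m) := by
  rw [← Phi_telescope A (hJ.monotone_nearestIn hne) hmk]
  refine Phi_comp_eq_comp_Phi _
    (T := fun i => expScale α (P (nearestIn hne i)) (i - nearestIn hne i : ℤ)) (fun i => ?_) hmk
  by_cases hi : i ∈ J ∧ i + 1 ∈ J
  · simp only [extendCoeff_of_mem A P hne α hi.1 hi.2, nearestIn_of_mem hne hi.1,
      nearestIn_of_mem hne hi.2, Phi_succ_self, sub_self, Int.cast_zero, expScale_zero]
    rw [← mul_def, ← mul_def, mul_one, one_mul]
  · rw [extendCoeff, if_neg hi, hJ.nearestIn_succ hne hi, Phi_self,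
      expScale_comp_expScale α (hP _ (nearestIn_mem hne i)), ← mul_def, mul_one]
    congr 1
    push_cast
    ring

end Extension

theorem ExpDichotomyOn.extend {n : ℕ} {A P : ℤ → (Euc n →L[ℝ] Euc n)} {J : Set ℤ}
    {K α : ℝ} (hne : J.Nonempty) (hJ : IsIntInterval J) (hED : ExpDichotomyOn A J P K α) :
    ExpDichotomyOn (extendCoeff A P hne α) univ (extendProj P hne) K α := by
  set c := nearestIn hne
  have hc := nearestIn_mem hne
  have hmono := hJ.monotone_nearestIn hne
  have hinv {k m : ℤ} (hmk : m ≤ k) := hED.invariance (c m) (hc m) (c k) (hc k) (hmono hmk)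
  have hscale {k m : ℤ} (hmk : m ≤ k) :=
    Phi_extendCoeff_comp_expScale (A := A) (α := α) hne hJ hED.proj hmk
  obtain ⟨Ψ, hΨ⟩ := hED.backward
  refine ⟨hED.one_le_K, hED.alpha_pos, fun k _ => hED.proj _ (hc k),
    fun k _ m _ => hED.rank_const _ (hc k) _ (hc m),
    fun m _ k _ hmk => Phi_comp_eq_comp_Phi _
      (extendCoeff_comp_extendProj hne hJ hED.proj hED.invariance) hmk,
    fun m _ k _ hmk => ?_, fun k _ _ => ?_,
    ⟨fun m k => Real.exp (α * ((m - c m : ℤ) - (k - c k : ℤ))) • Ψ (c m) (c k),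
      fun m _ k _ hmk => ?_⟩⟩
  · rw [extendProj, comp_eq_smul_of_comp_expScale (hED.proj _ (hc m)) (hinv hmk) (hscale hmk)]
    exact norm_exp_smul_le_of_le (hED.forward _ (hc m) _ (hc k) (hmono hmk)) (by push_cast; ring)
  · by_cases hk : k ∈ J ∧ k + 1 ∈ J
    · rw [extendCoeff_of_mem A P hne α hk.1 hk.2, extendProj_of_mem P hne hk.1,
        extendProj_of_mem P hne hk.2]
      exact hED.bijOn k hk.1 hk.2
    · rw [extendCoeff, if_neg hk, extendProj, extendProj, hJ.nearestIn_succ hne hk]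
      exact expScale_bijOn_ker α 1
  · obtain ⟨hleft, hright, hnorm⟩ := hΨ _ (hc m) _ (hc k) (hmono hmk)
    have hker {x} (hx : x ∈ LinearMap.ker (P (c m) : Euc n →ₗ[ℝ] Euc n)) :=
      apply_eq_smul_of_comp_expScale (hinv hmk) (hscale hmk) (LinearMap.mem_ker.mp hx)
    refine ⟨fun x hx => ?_, fun x hx => ?_, ?_⟩
    · rw [smul_apply, hker hx, map_smul, hleft x hx,
        exp_smul_exp_smul_of_add_eq_zero (by ring)]
    · obtain ⟨hmem, hΦ⟩ := hright x hx
      refine ⟨Submodule.smul_mem _ _ hmem, ?_⟩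
      rw [smul_apply, map_smul, hker hmem, hΦ,
        exp_smul_exp_smul_of_add_eq_zero (by ring)]
    · rw [smul_comp]
      exact norm_exp_smul_le_of_le hnorm (by push_cast; ring)

lemma expDichotomyOn_singleton {n : ℕ} (A : ℤ → (Euc n →L[ℝ] Euc n)) (c : ℤ)
    {K α : ℝ} (hK : 1 ≤ K) (hα : 0 < α) : ExpDichotomyOn A {c} (fun _ => 1) K α := by
  refine ⟨hK, hα, fun _ _ => ContinuousLinearMap.ext fun _ => rfl, fun _ _ _ _ => rfl,
    ?_, ?_, ?_, ⟨fun _ _ => 0, fun _ _ _ _ _ => ?_⟩⟩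
  · rintro m rfl k rfl -
    rw [Phi_self]
  · rintro m rfl k rfl -
    rw [Phi_self, ← mul_def, mul_one, sub_self, mul_zero, Real.exp_zero, mul_one]
    exact norm_id_le.trans hK
  · rintro k rfl h
    simp at h
  · refine ⟨fun x (hx : x = 0) => ?_, fun x (hx : x = 0) => ?_, ?_⟩
    · simp [hx]
    · simp [hx]
    · simp only [sub_self, comp_zero, norm_zero]
      positivity

/-- an exponential dichotomy on an interval `J` of integers (finite or
infinite) with constants `K`, `α` and projection `P` extends: there are coefficients
`Ã(k)`, agreeing with `A(k)` whenever `k` and `k+1` both lie in `J`, such that the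
extended equation has an exponential dichotomy on all of `ℤ` with the same constants
and with a projection family agreeing with `P` on `J`. -/
theorem statement18 {n : ℕ} (A P : ℤ → (Euc n →L[ℝ] Euc n)) (J : Set ℤ) (K α : ℝ)
    (hJ : IsIntInterval J)
    (hED : ExpDichotomyOn A J P K α) :
    ∃ Atil Ptil : ℤ → (Euc n →L[ℝ] Euc n),
      (∀ k : ℤ, k ∈ J → k + 1 ∈ J → Atil k = A k) ∧
      (∀ k ∈ J, Ptil k = P k) ∧
      ExpDichotomyOn Atil Set.univ Ptil K α := by
  rcases J.eq_empty_or_nonempty with rfl | hne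
  · have hpoint : IsIntInterval {0} := fun a b c ha hb hac hcb => by
      simp only [mem_singleton_iff] at ha hb ⊢
      omega
    exact ⟨_, _, fun k hk => hk.elim, fun k hk => hk.elim,
      (expDichotomyOn_singleton A 0 hED.one_le_K hED.alpha_pos).extend
        (singleton_nonempty 0) hpoint⟩
  · exact ⟨_, _, fun k hk hk1 => extendCoeff_of_mem A P hne α hk hk1,
      fun k hk => extendProj_of_mem P hne hk, hED.extend hne hJ⟩
end
end
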